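/- arXiv:1410.8433 — 5 statements merged into one kernel-verified Lean document; each statement's English description precedes it below -/
import Mathlib

section
/- Let ℓ ≥ 2 and let g be a kernel of ℓ dimensions. Fix k ∈ {0,…,ℓ−2} and define the kernel g̃ by g̃(v_0,…,v_{ℓ−1}) = g(v_0,…,v_{k−1}, v_{k+1}, v_k, v_{k+2},…,v_{ℓ−1}) (input coordinates k and k+1 swapped). Then D_g(k) ≤ D_{g̃}(k+1). -/
/-- The `i`-th partial distance of a kernel `g` of `ℓ` dimensions:
`D_g(i) = min { d_H(g(w•0•u), g(w•1•v)) : w ∈ {0,1}^i, u, v ∈ {0,1}^{ℓ−1−i} }`,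
phrased via pairs of inputs that agree on coordinates `< i` and differ as `0`/`1`
at coordinate `i`. -/
noncomputable def partialDist {ℓ : ℕ} (g : (Fin ℓ → ZMod 2) → (Fin ℓ → ZMod 2)) (i : ℕ) : ℕ :=
  sInf { d | ∃ x y : Fin ℓ → ZMod 2,
    (∀ j : Fin ℓ, (j : ℕ) < i → x j = y j) ∧
    (∀ j : Fin ℓ, (j : ℕ) = i → x j = 0 ∧ y j = 1) ∧
    d = hammingDist (g x) (g y) }

theorem swap_partialDist_le {ℓ : ℕ} (hℓ : 2 ≤ ℓ)
    (g : (Fin ℓ → ZMod 2) → (Fin ℓ → ZMod 2)) (hg : Function.Bijective g)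
    (k : ℕ) (hk : k ≤ ℓ - 2)
    (g' : (Fin ℓ → ZMod 2) → (Fin ℓ → ZMod 2))
    (hg' : ∀ v, g' v =
      g (v ∘ ⇑(Equiv.swap (⟨k, by omega⟩ : Fin ℓ) (⟨k + 1, by omega⟩ : Fin ℓ)))) :
    partialDist g k ≤ partialDist g' (k + 1) := by
  have hk1 : k + 1 < ℓ := by omega
  set a : Fin ℓ := ⟨k, by omega⟩
  set b : Fin ℓ := ⟨k + 1, hk1⟩
  -- the set defining partialDist g' (k+1) is nonempty
  have hne : { d | ∃ x y : Fin ℓ → ZMod 2,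
      (∀ j : Fin ℓ, (j : ℕ) < k + 1 → x j = y j) ∧
      (∀ j : Fin ℓ, (j : ℕ) = k + 1 → x j = 0 ∧ y j = 1) ∧
      d = hammingDist (g' x) (g' y) }.Nonempty := by
    refine ⟨_, (fun _ => 0), (fun j => if (j : ℕ) = k + 1 then 1 else 0), ?_, ?_, rfl⟩
    · intro j hj
      simp [Nat.ne_of_lt hj]
    · intro j hj
      simp [hj]
  have hmem := Nat.sInf_mem hne
  obtain ⟨x, y, h1, h2, h3⟩ := hmem
  apply Nat.sInf_le
  show ∃ x' y' : Fin ℓ → ZMod 2,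
    (∀ j : Fin ℓ, (j : ℕ) < k → x' j = y' j) ∧
    (∀ j : Fin ℓ, (j : ℕ) = k → x' j = 0 ∧ y' j = 1) ∧
    partialDist g' (k + 1) = hammingDist (g x') (g y')
  refine ⟨x ∘ ⇑(Equiv.swap a b), y ∘ ⇑(Equiv.swap a b), ?_, ?_, ?_⟩
  · intro j hj
    have hja : j ≠ a := Fin.ne_of_val_ne (Nat.ne_of_lt hj)
    have hjb : j ≠ b := Fin.ne_of_val_ne (Nat.ne_of_lt (Nat.lt_succ_of_lt hj))
    simp only [Function.comp_apply, Equiv.swap_apply_of_ne_of_ne hja hjb]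
    exact h1 j (Nat.lt_succ_of_lt hj)
  · intro j hj
    have hja : j = a := Fin.ext hj
    subst hja
    simp only [Function.comp_apply, Equiv.swap_apply_left]
    exact h2 b rfl
  · show partialDist g' (k + 1) = _
    simp only [partialDist]
    rw [h3, hg' x, hg' y]
end

section
/- Let g be a kernel of ℓ dimensions, let k ∈ {0,…,ℓ−1}, and let w ∈ {0,1}^k. Then the set S = { g(w•v) : v ∈ {0,1}^{ℓ−k} } has cardinality exactly 2^{ℓ−k}, and any two distinct elements c_0, c_1 ∈ S satisfy d_H(c_0, c_1) ≥ min_{k ≤ i ≤ ℓ−1} D_g(i). -/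
/-- Concatenation `w • v` of a prefix `w ∈ {0,1}^k` with a suffix `v ∈ {0,1}^{ℓ-k}`. -/
def extendStr {ℓ k : ℕ} (hk : k ≤ ℓ) (w : Fin k → ZMod 2) (v : Fin (ℓ - k) → ZMod 2) :
    Fin ℓ → ZMod 2 :=
  fun j => if h : (j : ℕ) < k then w ⟨j, h⟩
    else v ⟨(j : ℕ) - k, by have := j.isLt; omega⟩

lemma partialDist_le {ℓ : ℕ} (g : (Fin ℓ → ZMod 2) → (Fin ℓ → ZMod 2)) (i : ℕ)
    (x y : Fin ℓ → ZMod 2)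
    (h1 : ∀ j : Fin ℓ, (j : ℕ) < i → x j = y j)
    (h2 : ∀ j : Fin ℓ, (j : ℕ) = i → x j = 0 ∧ y j = 1) :
    partialDist g i ≤ hammingDist (g x) (g y) :=
  Nat.sInf_le ⟨x, y, h1, h2, rfl⟩

theorem subcode_card_and_minDist {ℓ : ℕ}
    (g : (Fin ℓ → ZMod 2) → (Fin ℓ → ZMod 2)) (hg : Function.Bijective g)
    (k : ℕ) (hk : k < ℓ) (w : Fin k → ZMod 2) :
    (Finset.image (fun v => g (extendStr hk.le w v)) Finset.univ).card = 2 ^ (ℓ - k) ∧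
    ∀ c0 ∈ Finset.image (fun v => g (extendStr hk.le w v)) Finset.univ,
      ∀ c1 ∈ Finset.image (fun v => g (extendStr hk.le w v)) Finset.univ,
        c0 ≠ c1 → (Finset.Ico k ℓ).inf' (Finset.nonempty_Ico.mpr hk) (partialDist g) ≤ hammingDist c0 c1 := by
  have hinj : Function.Injective (fun v : Fin (ℓ - k) → ZMod 2 => g (extendStr hk.le w v)) := by
    intro v v' h
    have h2 := hg.injective h
    funext j
    have hj : k + (j : ℕ) < ℓ := by have := j.isLt; omega
    have := congrFun h2 (⟨k + (j : ℕ), hj⟩ : Fin ℓ)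
    simp only [extendStr] at this
    rw [dif_neg (by omega), dif_neg (by omega)] at this
    have he : (⟨k + (j : ℕ) - k, by omega⟩ : Fin (ℓ - k)) = j := by
      ext; simp
    rwa [he] at this
  constructor
  · rw [Finset.card_image_of_injective _ hinj, Finset.card_univ, Fintype.card_fun]
    simp
  · intro c0 hc0 c1 hc1 hne
    obtain ⟨v0, -, rfl⟩ := Finset.mem_image.mp hc0
    obtain ⟨v1, -, rfl⟩ := Finset.mem_image.mp hc1
    set x := extendStr hk.le w v0 with hx
    set y := extendStr hk.le w v1 with hy
    have hxy : x ≠ y := fun h => hne (by rw [h])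
    have hex : ∃ n, ∃ h : n < ℓ, x ⟨n, h⟩ ≠ y ⟨n, h⟩ := by
      by_contra hcon
      push_neg at hcon
      exact hxy (funext fun j => hcon j j.isLt)
    set i := Nat.find hex with hi
    obtain ⟨hiℓ, hine⟩ := Nat.find_spec hex
    have hmin : ∀ j : Fin ℓ, (j : ℕ) < i → x j = y j := by
      intro j hji
      by_contra hc
      exact absurd (Nat.find_min' hex ⟨j.isLt, by simpa using hc⟩) (by omega)
    have hki : k ≤ i := by
      by_contra hc
      push_neg at hc
      apply hine
      show extendStr hk.le w v0 _ = extendStr hk.le w v1 _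
      simp only [extendStr]
      rw [dif_pos hc, dif_pos hc]
    have hmem : i ∈ Finset.Ico k ℓ := Finset.mem_Ico.mpr ⟨hki, hiℓ⟩
    have hcase : ∀ a b : ZMod 2, a ≠ b → (a = 0 ∧ b = 1) ∨ (a = 1 ∧ b = 0) := by decide
    have key : partialDist g i ≤ hammingDist (g x) (g y) := by
      rcases hcase _ _ hine with ⟨ha, hb⟩ | ⟨ha, hb⟩
      · refine partialDist_le g i x y hmin fun j hj => ?_
        have : j = ⟨i, hiℓ⟩ := by ext; exact hj
        subst this; exact ⟨ha, hb⟩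
      · rw [hammingDist_comm]
        refine partialDist_le g i y x (fun j hj => (hmin j hj).symm) fun j hj => ?_
        have : j = ⟨i, hiℓ⟩ := by ext; exact hj
        subst this; exact ⟨hb, ha⟩
    exact le_trans (Finset.inf'_le _ hmem) key
end

section
/- Let g be a kernel of ℓ dimensions whose partial distance sequence is non-decreasing. Let k ∈ {0,…,ℓ−1}, w ∈ {0,1}^k, and r ∈ {1,…,ℓ−k}, and set S = { g(w•v) : v ∈ {0,1}^{ℓ−k} }. Then the number of ordered pairs (c_0, c_1) of distinct elements of S with d_H(c_0, c_1) ≥ D_g(ℓ−r) is at least 2^{ℓ−k}·(2^r − 1). -/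
lemma extendStr_eval {ℓ k : ℕ} (hk : k ≤ ℓ) (w : Fin k → ZMod 2) (v : Fin (ℓ - k) → ZMod 2)
    (i : Fin (ℓ - k)) : extendStr hk w v ⟨k + (i : ℕ), by have := i.isLt; omega⟩ = v i := by
  unfold extendStr
  rw [dif_neg (by simp only [Fin.val_mk]; omega)]
  congr 1
  exact Fin.ext (by simp)

/-- Add `u` on the last `r` coordinates. -/
def addf (n r : ℕ) (v : Fin n → ZMod 2) (u : Fin r → ZMod 2) : Fin n → ZMod 2 :=
  fun j => v j + (if h : n - r ≤ (j : ℕ) ∧ (j : ℕ) - (n - r) < r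
    then u ⟨(j : ℕ) - (n - r), h.2⟩ else 0)

lemma addf_lo {n r : ℕ} (v : Fin n → ZMod 2) (u : Fin r → ZMod 2) (j : Fin n)
    (h : (j : ℕ) < n - r) : addf n r v u j = v j := by
  unfold addf
  rw [dif_neg (by omega), add_zero]

lemma addf_hi {n r : ℕ} (hrn : r ≤ n) (v : Fin n → ZMod 2) (u : Fin r → ZMod 2) (i : Fin r) :
    addf n r v u ⟨n - r + (i : ℕ), by have := i.isLt; omega⟩
      = v ⟨n - r + (i : ℕ), by have := i.isLt; omega⟩ + u i := by
  unfold addf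
  rw [dif_pos (by simp only [Fin.val_mk]; have := i.isLt; omega)]
  congr 2
  exact Fin.ext (by simp only [Fin.val_mk]; omega)

lemma partialDist_mono {ℓ : ℕ} (g : (Fin ℓ → ZMod 2) → (Fin ℓ → ZMod 2))
    (hmono : ∀ i, i + 1 < ℓ → partialDist g i ≤ partialDist g (i + 1))
    (a b : ℕ) (hab : a ≤ b) (hb : b < ℓ) : partialDist g a ≤ partialDist g b := by
  induction b, hab using Nat.le_induction with
  | base => exact le_rfl
  | succ b hb' ih => exact le_trans (ih (by omega)) (hmono b hb)

lemma key {ℓ : ℕ} (g : (Fin ℓ → ZMod 2) → (Fin ℓ → ZMod 2))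
    (hmono : ∀ i, i + 1 < ℓ → partialDist g i ≤ partialDist g (i + 1))
    (m : ℕ) (x y : Fin ℓ → ZMod 2) (hne : x ≠ y)
    (hagree : ∀ j : Fin ℓ, (j : ℕ) < m → x j = y j) :
    partialDist g m ≤ hammingDist (g x) (g y) := by
  classical
  have hSne : (Finset.univ.filter (fun j : Fin ℓ => x j ≠ y j)).Nonempty := by
    by_contra h
    apply hne
    funext j
    by_contra hj
    exact h ⟨j, by simpa using hj⟩
  set i₀ := (Finset.univ.filter (fun j : Fin ℓ => x j ≠ y j)).min' hSne with hi₀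
  have hi₀mem := Finset.min'_mem _ hSne
  have hxyne : x i₀ ≠ y i₀ := by simpa using hi₀mem
  have hmin : ∀ j : Fin ℓ, (j : ℕ) < (i₀ : ℕ) → x j = y j := by
    intro j hj
    by_contra hne'
    have hjmem : j ∈ Finset.univ.filter (fun j : Fin ℓ => x j ≠ y j) := by simpa using hne'
    have := Finset.min'_le _ j hjmem
    rw [Fin.le_iff_val_le_val] at this
    omega
  have hm_le : m ≤ (i₀ : ℕ) := by
    by_contra h
    exact hxyne (hagree i₀ (by omega))
  have hcases : ∀ a : ZMod 2, a = 0 ∨ a = 1 := by decide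
  have hwit : partialDist g (i₀ : ℕ) ≤ hammingDist (g x) (g y) := by
    rcases hcases (x i₀) with hx0 | hx1
    · have hy1 : y i₀ = 1 := by
        rcases hcases (y i₀) with h | h
        · exact absurd (hx0.trans h.symm) hxyne
        · exact h
      apply Nat.sInf_le
      exact ⟨x, y, hmin, fun j hj => by
        have : j = i₀ := Fin.ext hj
        subst this; exact ⟨hx0, hy1⟩, rfl⟩
    · have hy0 : y i₀ = 0 := by
        rcases hcases (y i₀) with h | h
        · exact h
        · exact absurd (hx1.trans h.symm) hxyne
      rw [hammingDist_comm]
      apply Nat.sInf_le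
      exact ⟨y, x, fun j hj => (hmin j hj).symm, fun j hj => by
        have : j = i₀ := Fin.ext hj
        subst this; exact ⟨hy0, hx1⟩, rfl⟩
  exact le_trans (partialDist_mono g hmono m (i₀ : ℕ) hm_le i₀.isLt) hwit

theorem pairs_count_ge {ℓ : ℕ}
    (g : (Fin ℓ → ZMod 2) → (Fin ℓ → ZMod 2)) (hg : Function.Bijective g)
    (hmono : ∀ i, i + 1 < ℓ → partialDist g i ≤ partialDist g (i + 1))
    (k : ℕ) (hk : k < ℓ) (w : Fin k → ZMod 2) (r : ℕ) (hr1 : 1 ≤ r) (hr2 : r ≤ ℓ - k) :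
    2 ^ (ℓ - k) * (2 ^ r - 1) ≤
      (((Finset.image (fun v => g (extendStr hk.le w v)) Finset.univ) ×ˢ
        (Finset.image (fun v => g (extendStr hk.le w v)) Finset.univ)).filter
        (fun p => p.1 ≠ p.2 ∧ partialDist g (ℓ - r) ≤ hammingDist p.1 p.2)).card := by
  classical
  have hext2 : Function.Injective (extendStr hk.le w) := by
    intro v v' h
    funext i
    have := congrFun h ⟨k + (i : ℕ), by have := i.isLt; omega⟩
    rwa [extendStr_eval, extendStr_eval] at this
  have hextinj : Function.Injective (fun v => g (extendStr hk.le w v)) :=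
    fun v v' h => hext2 (hg.1 h)
  have hrn : r ≤ ℓ - k := hr2
  have haddne : ∀ (v : Fin (ℓ - k) → ZMod 2) (u : Fin r → ZMod 2), u ≠ 0 →
      addf (ℓ - k) r v u ≠ v := by
    intro v u hu h
    apply hu
    funext j
    have h2 := (addf_hi hrn v u j).symm.trans
      (congrFun h ⟨(ℓ - k) - r + (j : ℕ), by have := j.isLt; omega⟩)
    show u j = 0
    exact add_eq_left.mp h2
  have hagree : ∀ (v : Fin (ℓ - k) → ZMod 2) (u : Fin r → ZMod 2), ∀ j : Fin ℓ,
      (j : ℕ) < ℓ - r →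
      extendStr hk.le w v j = extendStr hk.le w (addf (ℓ - k) r v u) j := by
    intro v u j hj
    unfold extendStr
    by_cases hjk : (j : ℕ) < k
    · rw [dif_pos hjk, dif_pos hjk]
    · rw [dif_neg hjk, dif_neg hjk,
        addf_lo v u _ (by simp only [Fin.val_mk]; omega)]
  set F : ((Fin (ℓ - k) → ZMod 2) × (Fin r → ZMod 2)) →
      ((Fin ℓ → ZMod 2) × (Fin ℓ → ZMod 2)) :=
    fun p => (g (extendStr hk.le w p.1), g (extendStr hk.le w (addf (ℓ - k) r p.1 p.2)))
    with hF
  set A : Finset ((Fin (ℓ - k) → ZMod 2) × (Fin r → ZMod 2)) :=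
    Finset.univ ×ˢ (Finset.univ.filter (fun u => u ≠ 0)) with hA
  have hAcard : A.card = 2 ^ (ℓ - k) * (2 ^ r - 1) := by
    rw [hA, Finset.card_product]
    congr 1
    · simp [Fintype.card_fun]
    · rw [Finset.filter_ne', Finset.card_erase_of_mem (Finset.mem_univ _)]
      simp [Fintype.card_fun]
  have hmem : ∀ p ∈ A, F p ∈
      (((Finset.image (fun v => g (extendStr hk.le w v)) Finset.univ) ×ˢ
        (Finset.image (fun v => g (extendStr hk.le w v)) Finset.univ)).filter
        (fun p => p.1 ≠ p.2 ∧ partialDist g (ℓ - r) ≤ hammingDist p.1 p.2)) := by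
    rintro ⟨v, u⟩ hp
    have hu : u ≠ 0 := by
      have := (Finset.mem_product.mp hp).2
      simpa using this
    have hxy : extendStr hk.le w v ≠ extendStr hk.le w (addf (ℓ - k) r v u) := by
      intro h
      exact haddne v u hu (hext2 h).symm
    simp only [hF, Finset.mem_filter, Finset.mem_product]
    refine ⟨⟨?_, ?_⟩, ?_, ?_⟩
    · exact Finset.mem_image.mpr ⟨v, Finset.mem_univ _, rfl⟩
    · exact Finset.mem_image.mpr ⟨addf (ℓ - k) r v u, Finset.mem_univ _, rfl⟩
    · intro hEq
      exact haddne v u hu (hextinj hEq).symm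
    · exact key g hmono (ℓ - r) _ _ hxy (hagree v u)
  have hFinj : Set.InjOn F A := by
    rintro ⟨v, u⟩ _ ⟨v', u'⟩ _ h
    simp only [hF, Prod.mk.injEq] at h
    obtain ⟨h1, h2⟩ := h
    have hv : v = v' := hextinj h1
    subst hv
    have h3 : addf (ℓ - k) r v u = addf (ℓ - k) r v u' := hextinj h2
    rw [Prod.mk.injEq]
    refine ⟨rfl, ?_⟩
    funext j
    have h4 := (addf_hi hrn v u j).symm.trans
      ((congrFun h3 ⟨(ℓ - k) - r + (j : ℕ), by have := j.isLt; omega⟩).trans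
        (addf_hi hrn v u' j))
    exact add_left_cancel h4
  calc 2 ^ (ℓ - k) * (2 ^ r - 1) = A.card := hAcard.symm
    _ ≤ _ := Finset.card_le_card_of_injOn F hmem hFinj
end

section
/- There is no kernel g of 3 dimensions with D_g(1) ≥ 2 and D_g(2) ≥ 3; that is, no bijection of {0,1}^3 has first partial distance at least 2 and second partial distance at least 3. -/
theorem no_kernel_dim3_with_2_3 :
    ¬ ∃ g : (Fin 3 → ZMod 2) → (Fin 3 → ZMod 2), Function.Bijective g ∧
      2 ≤ partialDist g 1 ∧ 3 ≤ partialDist g 2 := by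
  rintro ⟨g, -, h1, h2⟩
  set A := g ![0,0,0] with hA
  set B := g ![0,1,0] with hB
  set C := g ![0,1,1] with hC
  have hAB : 2 ≤ hammingDist A B :=
    h1.trans (Nat.sInf_le ⟨![0,0,0], ![0,1,0], by decide, by decide, rfl⟩)
  have hAC : 2 ≤ hammingDist A C :=
    h1.trans (Nat.sInf_le ⟨![0,0,0], ![0,1,1], by decide, by decide, rfl⟩)
  have hBCge : 3 ≤ hammingDist B C :=
    h2.trans (Nat.sInf_le ⟨![0,1,0], ![0,1,1], by decide, by decide, rfl⟩)
  have hBC3 : hammingDist B C = 3 :=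
    le_antisymm (by simpa using hammingDist_le_card_fintype (x := B) (y := C)) hBCge
  have hBC : ∀ i : Fin 3, B i ≠ C i := by
    have huniv : (Finset.univ.filter fun i => B i ≠ C i) = Finset.univ := by
      apply Finset.eq_univ_of_card
      simpa [hammingDist] using hBC3
    intro i
    have hi : i ∈ Finset.univ.filter fun i => B i ≠ C i := by
      rw [huniv]; exact Finset.mem_univ i
    exact (Finset.mem_filter.mp hi).2
  have hsum : hammingDist A B + hammingDist A C = 3 := by
    have hfilter : (Finset.univ.filter fun i => A i ≠ C i)
        = Finset.univ.filter (fun i => ¬ (A i ≠ B i)) := by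
      apply Finset.filter_congr
      intro i _
      have hbc := hBC i
      revert hbc
      generalize A i = a
      generalize B i = b
      generalize C i = c
      revert a b c
      decide
    unfold hammingDist
    rw [hfilter, Finset.card_filter_add_card_filter_not]
    simp
  omega
end

section
/- There is no kernel g of 4 dimensions with D_g(2) ≥ 3 and D_g(3) ≥ 3; that is, no bijection of {0,1}^4 has both its second and third partial distances at least 3. -/
/-- No three points of `{0,1}^4` are pairwise at Hamming distance `≥ 3`. -/
lemma aux_no3 : ∀ a b c : Fin 4 → ZMod 2,
    hammingDist a b < 3 ∨ hammingDist a c < 3 ∨ hammingDist b c < 3 := by decide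

theorem no_kernel_dim4_with_3_3 :
    ¬ ∃ g : (Fin 4 → ZMod 2) → (Fin 4 → ZMod 2), Function.Bijective g ∧
      3 ≤ partialDist g 2 ∧ 3 ≤ partialDist g 3 := by
  rintro ⟨g, -, h2, h3⟩
  set a : Fin 4 → ZMod 2 := ![0,0,0,0] with ha
  set b : Fin 4 → ZMod 2 := ![0,0,0,1] with hb
  set c : Fin 4 → ZMod 2 := ![0,0,1,0] with hc
  have hab : hammingDist (g a) (g b) ∈ { d | ∃ x y : Fin 4 → ZMod 2,
      (∀ j : Fin 4, (j : ℕ) < 3 → x j = y j) ∧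
      (∀ j : Fin 4, (j : ℕ) = 3 → x j = 0 ∧ y j = 1) ∧
      d = hammingDist (g x) (g y) } :=
    ⟨a, b, by decide, by decide, rfl⟩
  have hac : hammingDist (g a) (g c) ∈ { d | ∃ x y : Fin 4 → ZMod 2,
      (∀ j : Fin 4, (j : ℕ) < 2 → x j = y j) ∧
      (∀ j : Fin 4, (j : ℕ) = 2 → x j = 0 ∧ y j = 1) ∧
      d = hammingDist (g x) (g y) } :=
    ⟨a, c, by decide, by decide, rfl⟩
  have hbc : hammingDist (g b) (g c) ∈ { d | ∃ x y : Fin 4 → ZMod 2,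
      (∀ j : Fin 4, (j : ℕ) < 2 → x j = y j) ∧
      (∀ j : Fin 4, (j : ℕ) = 2 → x j = 0 ∧ y j = 1) ∧
      d = hammingDist (g x) (g y) } :=
    ⟨b, c, by decide, by decide, rfl⟩
  have h1 := le_trans h3 (Nat.sInf_le hab)
  have h2' := le_trans h2 (Nat.sInf_le hac)
  have h3' := le_trans h2 (Nat.sInf_le hbc)
  rcases aux_no3 (g a) (g b) (g c) with h | h | h <;> omega
end
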